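/- The dynamic nonlinear expectation of smallest super-hedging prices is consistent on L^∞(P): for all s ≤ t and H ∈ L^∞(P), E_s(E_t(H)) = E_s(H). -/
import Mathlib


open MeasureTheory

variable {Ω : Type*}

/-- A self-financing trading strategy: `ξ k` (the position held over `(k-1, k]`) is
`F_{k-1}`-measurable. -/
def Predictable {m : MeasurableSpace Ω} {d : ℕ} (F : Filtration ℕ m)
    (ξ : ℕ → Ω → Fin d → ℝ) : Prop :=
  ∀ k : ℕ, 1 ≤ k → Measurable[F (k - 1)] (ξ k)

/-- Gains from trading with strategy `ξ` in `X` from time `t` to time `T`: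
`G_t(ξ) = ∑_{k=t+1}^T ξ_k · (X_k - X_{k-1})`. -/
def Gains {d : ℕ} (X ξ : ℕ → Ω → Fin d → ℝ) (t T : ℕ) (ω : Ω) : ℝ :=
  ∑ k ∈ Finset.Icc (t + 1) T, ∑ i, ξ k ω i * (X k ω i - X (k - 1) ω i)

/-- `Q` is an equivalent martingale measure for the price process `X` on `{0,…,T}`:
`Q` is a probability measure equivalent to `P` under which each component of `X` is
integrable and a martingale. -/
def IsEMM {m : MeasurableSpace Ω} {d : ℕ} (P Q : Measure Ω) (F : Filtration ℕ m)
    (X : ℕ → Ω → Fin d → ℝ) (T : ℕ) : Prop :=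
  IsProbabilityMeasure Q ∧ (∀ A : Set Ω, P A = 0 ↔ Q A = 0) ∧
    (∀ t, t ≤ T → ∀ i, Integrable (fun ω => X t ω i) Q) ∧
    (∀ t, t < T → ∀ i,
      (Q[(fun ω => X (t + 1) ω i)|F t]) =ᵐ[Q] fun ω => X t ω i)

/-- The set of super-hedging prices at time `t` for the claim `H`. -/
def SuperPrices {m : MeasurableSpace Ω} {d : ℕ} (P : Measure Ω)
    (F : Filtration ℕ m) (X : ℕ → Ω → Fin d → ℝ) (T t : ℕ) (H : Ω → ℝ) :
    Set (Ω → ℝ) :=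
  {g | Measurable[F t] g ∧ ∃ ξ, Predictable F ξ ∧
    ∀ᵐ ω ∂P, H ω ≤ g ω + Gains X ξ t T ω}

/-- The set of sub-hedging prices at time `t` for the claim `H`. -/
def SubPrices {m : MeasurableSpace Ω} {d : ℕ} (P : Measure Ω)
    (F : Filtration ℕ m) (X : ℕ → Ω → Fin d → ℝ) (T t : ℕ) (H : Ω → ℝ) :
    Set (Ω → ℝ) :=
  {g | Measurable[F t] g ∧ ∃ ξ, Predictable F ξ ∧
    ∀ᵐ ω ∂P, g ω + Gains X ξ t T ω ≤ H ω}

/-- The set of conditional expectations `E_Q[H | F_t]` over `Q ∈ M_e`. -/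
def MPrices {m : MeasurableSpace Ω} {d : ℕ} (P : Measure Ω)
    (F : Filtration ℕ m) (X : ℕ → Ω → Fin d → ℝ) (T t : ℕ) (H : Ω → ℝ) :
    Set (Ω → ℝ) :=
  {f | ∃ Q : Measure Ω, IsEMM P Q F X T ∧ f = Q[H|F t]}

/-- `g` is a `P`-a.e. upper bound of the family `S`. -/
def IsAEUpperBound {_m : MeasurableSpace Ω} (P : Measure Ω)
    (S : Set (Ω → ℝ)) (g : Ω → ℝ) : Prop :=
  ∀ f ∈ S, f ≤ᵐ[P] g

/-- `g` is a `P`-a.e. lower bound of the family `S`. -/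
def IsAELowerBound {_m : MeasurableSpace Ω} (P : Measure Ω)
    (S : Set (Ω → ℝ)) (g : Ω → ℝ) : Prop :=
  ∀ f ∈ S, g ≤ᵐ[P] f

/-- `g` is (a version of) the essential supremum of the family `S` under `P`. -/
def IsEssSupOf {_m : MeasurableSpace Ω} (P : Measure Ω)
    (S : Set (Ω → ℝ)) (g : Ω → ℝ) : Prop :=
  IsAEUpperBound P S g ∧ ∀ h, IsAEUpperBound P S h → g ≤ᵐ[P] h

/-- `g` is (a version of) the essential infimum of the family `S` under `P`. -/
def IsEssInfOf {_m : MeasurableSpace Ω} (P : Measure Ω)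
    (S : Set (Ω → ℝ)) (g : Ω → ℝ) : Prop :=
  IsAELowerBound P S g ∧ ∀ h, IsAELowerBound P S h → h ≤ᵐ[P] g

section Aux

open Filter Real

variable {m : MeasurableSpace Ω} {d T : ℕ} {F : Filtration ℕ m}

lemma gains_eq_Ioc {X ξ : ℕ → Ω → Fin d → ℝ} (t T : ℕ) (ω : Ω) :
    Gains X ξ t T ω = ∑ k ∈ Finset.Ioc t T, ∑ i, ξ k ω i * (X k ω i - X (k - 1) ω i) := by
  rw [Gains, Finset.Icc_add_one_left_eq_Ioc]

lemma gains_split_two {X ξ η ζ : ℕ → Ω → Fin d → ℝ} {s t T : ℕ} (hst : s ≤ t) (htT : t ≤ T)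
    (ω : Ω) (h1 : ∀ k, s + 1 ≤ k → k ≤ t → ζ k ω = ξ k ω)
    (h2 : ∀ k, t + 1 ≤ k → k ≤ T → ζ k ω = η k ω) :
    Gains X ζ s T ω = Gains X ξ s t ω + Gains X η t T ω := by
  rw [gains_eq_Ioc, gains_eq_Ioc, gains_eq_Ioc, ← Finset.sum_Ioc_consecutive _ hst htT]
  congr 1
  · refine Finset.sum_congr rfl fun k hk => ?_
    rw [Finset.mem_Ioc] at hk
    rw [h1 k hk.1 hk.2]
  · refine Finset.sum_congr rfl fun k hk => ?_
    rw [Finset.mem_Ioc] at hk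
    rw [h2 k hk.1 hk.2]

lemma gains_measurable {X ξ : ℕ → Ω → Fin d → ℝ} (hX : ∀ u, Measurable[F u] (X u))
    (hξ : Predictable F ξ) (s t : ℕ) :
    Measurable[F t] (fun ω => Gains X ξ s t ω) := by
  simp only [Gains]
  apply Finset.measurable_sum
  intro k hk
  rw [Finset.mem_Icc] at hk
  apply Finset.measurable_sum
  intro i _
  have hξk : Measurable[F t] (ξ k) :=
    (hξ k (by omega)).mono (F.mono (by omega : k - 1 ≤ t)) le_rfl
  have hXk : Measurable[F t] (X k) := (hX k).mono (F.mono hk.2) le_rfl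
  have hXk1 : Measurable[F t] (X (k - 1)) := (hX (k - 1)).mono (F.mono (by omega)) le_rfl
  exact ((measurable_pi_apply i).comp hξk).mul
    (((measurable_pi_apply i).comp hXk).sub ((measurable_pi_apply i).comp hXk1))

lemma ae_eq_of_equiv {P Q : Measure Ω} (h : ∀ A : Set Ω, P A = 0 ↔ Q A = 0) :
    (ae P : Filter Ω) = ae Q :=
  Filter.ext fun s => by simp only [mem_ae_iff, h]

/-- One-step no-arbitrage under an EMM: a conditionally known quantity dominated by the
gains of a single trading period is nonpositive. -/
lemma onestep {P Q : Measure Ω} {X : ℕ → Ω → Fin d → ℝ}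
    (hQ : IsEMM P Q F X T)
    {u : ℕ} (hu : u < T) {Y : Ω → ℝ} (hY : Measurable[F u] Y)
    {ζ : Ω → Fin d → ℝ} (hζ : Measurable[F u] ζ)
    (h : ∀ᵐ ω ∂Q, Y ω ≤ ∑ i, ζ ω i * (X (u + 1) ω i - X u ω i)) :
    ∀ᵐ ω ∂Q, Y ω ≤ 0 := by
  classical
  obtain ⟨hQP, hQE, hQI, hQM⟩ := hQ
  haveI := hQP
  set c : Ω → ℝ := fun ω => if 0 < Y ω then (1 + ∑ i, |ζ ω i|)⁻¹ else 0 with hc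
  have hsumnn : ∀ ω, 0 ≤ ∑ i, |ζ ω i| := fun ω =>
    Finset.sum_nonneg fun i _ => abs_nonneg _
  have hsumpos : ∀ ω, 0 < 1 + ∑ i, |ζ ω i| := fun ω => by
    have := hsumnn ω; linarith
  have hc_nonneg : ∀ ω, 0 ≤ c ω := fun ω => by
    rw [hc]; dsimp only; split
    · exact inv_nonneg.2 (hsumpos ω).le
    · exact le_rfl
  have hc_meas : Measurable[F u] c := by
    have h1 : Measurable[F u] fun ω => ∑ i, |ζ ω i| := by
      apply Finset.measurable_sum
      intro i _
      have hcomp : Measurable[F u] fun ω => ζ ω i := (measurable_pi_apply i).comp hζ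
      have : ∀ ω, |ζ ω i| = max (ζ ω i) (-ζ ω i) := fun ω => abs_eq_max_neg
      simp only [this]
      exact hcomp.max hcomp.neg
    have h2 : Measurable[F u] fun ω => (1 + ∑ i, |ζ ω i|)⁻¹ :=
      (measurable_const.add h1).inv
    exact Measurable.ite (measurableSet_lt measurable_const hY) h2 measurable_const
  have hφb : ∀ (i : Fin d) (ω : Ω), |c ω * ζ ω i| ≤ 1 := by
    intro i ω
    have h1 : |ζ ω i| ≤ 1 + ∑ j, |ζ ω j| := by
      have := Finset.single_le_sum (f := fun j => |ζ ω j|)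
        (fun j _ => abs_nonneg _) (Finset.mem_univ i)
      linarith
    rw [abs_mul]
    rw [hc]; dsimp only; split
    · rw [abs_of_nonneg (inv_nonneg.2 (hsumpos ω).le)]
      calc (1 + ∑ j, |ζ ω j|)⁻¹ * |ζ ω i|
          ≤ (1 + ∑ j, |ζ ω j|)⁻¹ * (1 + ∑ j, |ζ ω j|) := by
            exact mul_le_mul_of_nonneg_left h1 (inv_nonneg.2 (hsumpos ω).le)
        _ = 1 := inv_mul_cancel₀ (hsumpos ω).ne'
    · simp
  have hφmeas : ∀ i : Fin d, Measurable[F u] (fun ω => c ω * ζ ω i) := fun i =>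
    hc_meas.mul ((measurable_pi_apply i).comp hζ)
  haveI : SigmaFinite (Q.trim (F.le u)) :=
    IsFiniteMeasure.toSigmaFinite (Q.trim (F.le u))
  have hterm : ∀ i : Fin d,
      Integrable (fun ω => (c ω * ζ ω i) * (X (u + 1) ω i - X u ω i)) Q := by
    intro i
    have hgsub : Integrable (fun ω => X (u + 1) ω i - X u ω i) Q :=
      (hQI (u + 1) hu i).sub (hQI u hu.le i)
    exact hgsub.bdd_mul ((hφmeas i).mono (F.le u) le_rfl).aestronglyMeasurable
      (ae_of_all _ fun ω => by rw [Real.norm_eq_abs]; exact hφb i ω)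
  have key : ∀ i : Fin d,
      ∫ ω, (c ω * ζ ω i) * (X (u + 1) ω i - X u ω i) ∂Q = 0 := by
    intro i
    have hint1 : Integrable (fun ω => X (u + 1) ω i) Q := hQI (u + 1) hu i
    have hint0 : Integrable (fun ω => X u ω i) Q := hQI u hu.le i
    have haem : AEStronglyMeasurable (fun ω => c ω * ζ ω i) Q :=
      ((hφmeas i).mono (F.le u) le_rfl).aestronglyMeasurable
    have hbd : ∀ᵐ ω ∂Q, ‖c ω * ζ ω i‖ ≤ 1 := ae_of_all _ fun ω => by
      rw [Real.norm_eq_abs]; exact hφb i ω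
    have hintm1 : Integrable (fun ω => (c ω * ζ ω i) * X (u + 1) ω i) Q :=
      hint1.bdd_mul haem hbd
    have hintm0 : Integrable (fun ω => (c ω * ζ ω i) * X u ω i) Q :=
      hint0.bdd_mul haem hbd
    have hmul1 : Q[(fun ω => (c ω * ζ ω i) * X (u + 1) ω i)|F u]
        =ᵐ[Q] fun ω => (c ω * ζ ω i) * (Q[(fun ω => X (u + 1) ω i)|F u]) ω := by
      have := condExp_stronglyMeasurable_mul_of_bound (μ := Q) (F.le u)
        ((hφmeas i).stronglyMeasurable) hint1 1
        (ae_of_all _ fun ω => by rw [Real.norm_eq_abs]; exact hφb i ω)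
      exact this
    have hmart := hQM u hu i
    have e1 : ∫ ω, (c ω * ζ ω i) * X (u + 1) ω i ∂Q
        = ∫ ω, (c ω * ζ ω i) * X u ω i ∂Q := by
      conv_lhs => rw [← integral_condExp (F.le u)]
      rw [integral_congr_ae hmul1]
      refine integral_congr_ae ?_
      filter_upwards [hmart] with ω hω
      rw [hω]
    have : (fun ω => (c ω * ζ ω i) * (X (u + 1) ω i - X u ω i))
        = fun ω => (c ω * ζ ω i) * X (u + 1) ω i - (c ω * ζ ω i) * X u ω i := by
      funext ω; ring
    rw [this, integral_sub hintm1 hintm0, e1, sub_self]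
  set Z : Ω → ℝ := fun ω => ∑ i, (c ω * ζ ω i) * (X (u + 1) ω i - X u ω i) with hZ
  have hZint : Integrable Z Q := integrable_finset_sum _ fun i _ => hterm i
  have hZeq : ∫ ω, Z ω ∂Q = 0 := by
    rw [hZ, integral_finset_sum _ fun i _ => hterm i]
    exact Finset.sum_eq_zero fun i _ => key i
  have hZfac : ∀ ω, Z ω = c ω * ∑ i, ζ ω i * (X (u + 1) ω i - X u ω i) := by
    intro ω
    rw [hZ, Finset.mul_sum]
    exact Finset.sum_congr rfl fun i _ => by ring
  have hZnn : 0 ≤ᵐ[Q] Z := by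
    filter_upwards [h] with ω hω
    rw [hZfac]
    rcases lt_or_ge 0 (Y ω) with hy | hy
    · have hcpos : 0 < c ω := by
        rw [hc]; dsimp only; rw [if_pos hy]; exact inv_pos.2 (hsumpos ω)
      have : 0 < ∑ i, ζ ω i * (X (u + 1) ω i - X u ω i) := lt_of_lt_of_le hy hω
      positivity
    · have : c ω = 0 := by rw [hc]; dsimp only; rw [if_neg (not_lt.2 hy)]
      simp [this]
  have hZzero : Z =ᵐ[Q] 0 := (integral_eq_zero_iff_of_nonneg_ae hZnn hZint).1 hZeq
  filter_upwards [h, hZzero] with ω hω hz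
  by_contra hY0
  push_neg at hY0
  have hcpos : 0 < c ω := by
    rw [hc]; dsimp only; rw [if_pos hY0]; exact inv_pos.2 (hsumpos ω)
  have : 0 < Z ω := by
    rw [hZfac]
    exact mul_pos hcpos (lt_of_lt_of_le hY0 hω)
  rw [hz] at this
  simp at this

/-- Multi-period no-arbitrage: an `F u`-measurable quantity dominated a.s. by the gains
of a predictable strategy over `(u, T]` is nonpositive a.s. -/
lemma NAstar {P Q : Measure Ω} {X : ℕ → Ω → Fin d → ℝ}
    (hX : ∀ u, Measurable[F u] (X u)) (hQ : IsEMM P Q F X T) :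
    ∀ n u, u + n = T → ∀ Y : Ω → ℝ, Measurable[F u] Y →
      ∀ ζ : ℕ → Ω → Fin d → ℝ, Predictable F ζ →
      (∀ᵐ ω ∂P, Y ω ≤ Gains X ζ u T ω) → ∀ᵐ ω ∂P, Y ω ≤ 0 := by
  have hae : (ae P : Filter Ω) = ae Q := ae_eq_of_equiv hQ.2.1
  intro n
  induction n with
  | zero =>
    intro u hu Y hY ζ hζ h
    have hempty : Finset.Icc (u + 1) T = ∅ := Finset.Icc_eq_empty (by omega)
    filter_upwards [h] with ω hω
    simpa [Gains, hempty] using hω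
  | succ n ih =>
    intro u hu Y hY ζ hζ h
    have hu1 : u + 1 + n = T := by omega
    have huT : u < T := by omega
    have hdec : ∀ ω, Gains X ζ u T ω =
        (∑ i, ζ (u + 1) ω i * (X (u + 1) ω i - X u ω i)) + Gains X ζ (u + 1) T ω := by
      intro ω
      rw [gains_split_two (X := X) (ξ := ζ) (η := ζ) (ζ := ζ) (Nat.le_succ u)
        (by omega : u + 1 ≤ T) ω (fun _ _ _ => rfl) (fun _ _ _ => rfl)]
      congr 1
      rw [gains_eq_Ioc, Nat.Ioc_succ_singleton, Finset.sum_singleton]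
      simp
    have hζu : Measurable[F u] (ζ (u + 1)) := by
      have := hζ (u + 1) (by omega)
      simpa using this
    set Y' : Ω → ℝ := fun ω => Y ω - ∑ i, ζ (u + 1) ω i * (X (u + 1) ω i - X u ω i) with hY'
    have hY'm : Measurable[F (u + 1)] Y' := by
      refine (hY.mono (F.mono (Nat.le_succ u)) le_rfl).sub ?_
      apply Finset.measurable_sum
      intro i _
      exact ((measurable_pi_apply i).comp (hζu.mono (F.mono (Nat.le_succ u)) le_rfl)).mul
        (((measurable_pi_apply i).comp (hX (u + 1))).sub
          ((measurable_pi_apply i).comp ((hX u).mono (F.mono (Nat.le_succ u)) le_rfl)))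
    have h' : ∀ᵐ ω ∂P, Y' ω ≤ Gains X ζ (u + 1) T ω := by
      filter_upwards [h] with ω hω
      rw [hdec ω] at hω
      simp only [hY']
      linarith
    have hY'0 := ih (u + 1) hu1 Y' hY'm ζ hζ h'
    have hQae : ∀ᵐ ω ∂Q, Y ω ≤ ∑ i, ζ (u + 1) ω i * (X (u + 1) ω i - X u ω i) := by
      rw [show (ae Q : Filter Ω) = ae P from hae.symm]
      filter_upwards [hY'0] with ω hω
      simp only [hY'] at hω
      linarith
    have := onestep hQ huT hY hζu hQae
    rw [show (ae Q : Filter Ω) = ae P from hae.symm] at this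
    exact this


lemma const_mem_superPrices {P : Measure Ω} {X : ℕ → Ω → Fin d → ℝ} {t : ℕ} {H : Ω → ℝ}
    {C : ℝ} (hHb : ∀ᵐ ω ∂P, H ω ≤ C) : (fun _ => C) ∈ SuperPrices P F X T t H := by
  refine ⟨measurable_const, fun _ _ _ => 0, fun k hk => measurable_const, ?_⟩
  filter_upwards [hHb] with ω h
  simpa [Gains] using h

lemma max_mem_superPrices {P : Measure Ω} {X : ℕ → Ω → Fin d → ℝ} {t : ℕ} {H' : Ω → ℝ}
    {φ : Ω → ℝ} (c : ℝ) (hφ : φ ∈ SuperPrices P F X T t H') :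
    (fun ω => max (φ ω) c) ∈ SuperPrices P F X T t H' := by
  obtain ⟨hm, ζ, hζ, hae⟩ := hφ
  refine ⟨hm.max measurable_const, ζ, hζ, ?_⟩
  filter_upwards [hae] with ω h
  have := le_max_left (φ ω) c
  linarith

lemma min_mem_superPrices {P : Measure Ω} {X : ℕ → Ω → Fin d → ℝ} {t : ℕ} {H' : Ω → ℝ}
    {φ ψ : Ω → ℝ} (hφ : φ ∈ SuperPrices P F X T t H') (hψ : ψ ∈ SuperPrices P F X T t H') :
    (fun ω => min (φ ω) (ψ ω)) ∈ SuperPrices P F X T t H' := by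
  classical
  obtain ⟨hφm, ζφ, hζφ, hφae⟩ := hφ
  obtain ⟨hψm, ζψ, hζψ, hψae⟩ := hψ
  have hA : MeasurableSet[F t] {ω | φ ω ≤ ψ ω} := measurableSet_le hφm hψm
  refine ⟨hφm.min hψm,
    fun k => if k ≤ t then ζφ k else {ω | φ ω ≤ ψ ω}.piecewise (ζφ k) (ζψ k), ?_, ?_⟩
  · intro k hk
    by_cases hkt : k ≤ t
    · simpa [hkt] using hζφ k hk
    · simp only [if_neg hkt]
      exact Measurable.piecewise ((F.mono (by omega : t ≤ k - 1)) _ hA) (hζφ k hk) (hζψ k hk)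
  · filter_upwards [hφae, hψae] with ω h1 h2
    by_cases hω : φ ω ≤ ψ ω
    · have hg : Gains X
          (fun k => if k ≤ t then ζφ k else {ω | φ ω ≤ ψ ω}.piecewise (ζφ k) (ζψ k)) t T ω
          = Gains X ζφ t T ω := by
        rw [gains_eq_Ioc, gains_eq_Ioc]
        refine Finset.sum_congr rfl fun k hk => ?_
        rw [Finset.mem_Ioc] at hk
        have hkt : ¬ k ≤ t := by omega
        refine Finset.sum_congr rfl fun i _ => ?_
        rw [if_neg hkt, Set.piecewise_eq_of_mem {ω | φ ω ≤ ψ ω} (ζφ k) (ζψ k) (show ω ∈ {ω | φ ω ≤ ψ ω} from hω)]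
      rw [hg, min_eq_left hω]
      exact h1
    · have hω' : ω ∉ {ω | φ ω ≤ ψ ω} := hω
      have hg : Gains X
          (fun k => if k ≤ t then ζφ k else {ω | φ ω ≤ ψ ω}.piecewise (ζφ k) (ζψ k)) t T ω
          = Gains X ζψ t T ω := by
        rw [gains_eq_Ioc, gains_eq_Ioc]
        refine Finset.sum_congr rfl fun k hk => ?_
        rw [Finset.mem_Ioc] at hk
        have hkt : ¬ k ≤ t := by omega
        refine Finset.sum_congr rfl fun i _ => ?_
        rw [if_neg hkt, Set.piecewise_eq_of_notMem {ω | φ ω ≤ ψ ω} (ζφ k) (ζψ k) hω']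
      rw [hg, min_eq_right (le_of_lt (lt_of_not_ge hω))]
      exact h2

lemma integrable_arctan_comp {P : Measure Ω} [IsFiniteMeasure P] {ψ : Ω → ℝ}
    (hψ : Measurable ψ) : Integrable (fun ω => Real.arctan (ψ ω)) P := by
  refine ⟨(Real.measurable_arctan.comp hψ).aestronglyMeasurable, ?_⟩
  refine HasFiniteIntegral.of_bounded (C := Real.pi / 2) (ae_of_all _ fun ω => ?_)
  rw [Real.norm_eq_abs, abs_le]
  exact ⟨(Real.neg_pi_div_two_lt_arctan _).le, (Real.arctan_lt_pi_div_two _).le⟩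

end Aux

/-- The dynamic nonlinear expectation of smallest super-hedging prices
is consistent on `L^∞(P)`: for `s ≤ t` and bounded `H`, `E_s(E_t(H)) = E_s(H)`. -/
theorem superhedging_prices_consistent
    {m : MeasurableSpace Ω} {d T : ℕ} (F : Filtration ℕ m)
    (P : Measure Ω) [IsProbabilityMeasure P]
    (X : ℕ → Ω → Fin d → ℝ) (hX : ∀ t, Measurable[F t] (X t))
    (hFT : (F T : MeasurableSpace Ω) = m)
    (hNA : ∃ Q : Measure Ω, IsEMM P Q F X T)
    (H : Ω → ℝ) (hH : Measurable H) (C : ℝ) (hHb : ∀ᵐ ω ∂P, |H ω| ≤ C)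
    (s t : ℕ) (hst : s ≤ t) (ht : t ≤ T)
    (gt gs g : Ω → ℝ)
    (hgt : IsEssInfOf P (SuperPrices P F X T t H) gt)
    (hgs : IsEssInfOf P (SuperPrices P F X T s H) gs)
    (hg : IsEssInfOf P (SuperPrices P F X T s gt) g) :
    g =ᵐ[P] gs := by
  classical
  obtain ⟨Q, hQ⟩ := hNA
  have hHleC : ∀ᵐ ω ∂P, H ω ≤ C := hHb.mono fun ω h => (abs_le.1 h).2
  have hHgeC : ∀ᵐ ω ∂P, -C ≤ H ω := hHb.mono fun ω h => (abs_le.1 h).1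
  -- Part I : g ≤ᵐ[P] gs
  have hpartI : g ≤ᵐ[P] gs := by
    refine hgs.2 g ?_
    intro φ hφ
    obtain ⟨hφm, ζ, hζ, hφae⟩ := hφ
    have hWmem : (fun ω => φ ω + Gains X ζ s t ω) ∈ SuperPrices P F X T t H := by
      refine ⟨(hφm.mono (F.mono hst) le_rfl).add (gains_measurable hX hζ s t), ζ, hζ, ?_⟩
      filter_upwards [hφae] with ω h
      rw [gains_split_two (X := X) (ξ := ζ) (η := ζ) (ζ := ζ) hst ht ω
        (fun _ _ _ => rfl) (fun _ _ _ => rfl)] at h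
      linarith
    have hgtW := hgt.1 _ hWmem
    have hφmem : φ ∈ SuperPrices P F X T s gt := by
      refine ⟨hφm, fun k => if k ≤ t then ζ k else fun _ _ => 0, ?_, ?_⟩
      · intro k hk
        by_cases hkt : k ≤ t
        · simpa [hkt] using hζ k hk
        · simp only [if_neg hkt]
          exact measurable_const
      · filter_upwards [hgtW] with ω h
        rw [gains_split_two (X := X) (ξ := ζ) (η := fun _ _ _ => (0 : ℝ))
          (ζ := fun k => if k ≤ t then ζ k else fun _ _ => 0) hst ht ω
          (fun k h1 h2 => by simp [h2]) (fun k h1 h2 => by simp [show ¬ k ≤ t by omega])]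
        have hzero : Gains X (fun _ _ _ => (0 : ℝ)) t T ω = 0 := by simp [Gains]
        rw [hzero]
        simpa using h
    exact hg.1 _ hφmem
  have hCmem : (fun _ => C) ∈ SuperPrices P F X T t H := const_mem_superPrices hHleC
  -- every superhedging price is ≥ -C a.e.
  have hmemlb : ∀ φ ∈ SuperPrices P F X T t H, ∀ᵐ ω ∂P, -C ≤ φ ω := by
    intro φ hφ
    obtain ⟨hφm, ζ, hζ, hφae⟩ := hφ
    have hY : Measurable[F t] (fun ω => -C - φ ω) := measurable_const.sub hφm
    have hle : ∀ᵐ ω ∂P, -C - φ ω ≤ Gains X ζ t T ω := by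
      filter_upwards [hφae, hHgeC] with ω h1 h2
      linarith
    have h := NAstar hX hQ (T - t) t (by omega) _ hY ζ hζ hle
    filter_upwards [h] with ω h
    linarith
  -- near optimizers of the arctan integral
  have hAne : ((fun ψ : Ω → ℝ => ∫ ω, Real.arctan (ψ ω) ∂P) ''
      SuperPrices P F X T t H).Nonempty := ⟨_, ⟨_, hCmem, rfl⟩⟩
  set J := sInf ((fun ψ : Ω → ℝ => ∫ ω, Real.arctan (ψ ω) ∂P) '' SuperPrices P F X T t H)
    with hJdef
  have hint : ∀ φ ∈ SuperPrices P F X T t H, Integrable (fun ω => Real.arctan (φ ω)) P :=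
    fun φ hφ => integrable_arctan_comp (hφ.1.mono (F.le t) le_rfl)
  have hbdd : BddBelow ((fun ψ : Ω → ℝ => ∫ ω, Real.arctan (ψ ω) ∂P) ''
      SuperPrices P F X T t H) := by
    refine ⟨-(Real.pi / 2), ?_⟩
    rintro x ⟨ψ, hψ, rfl⟩
    have hmono : (fun _ : Ω => -(Real.pi / 2)) ≤ fun ω => Real.arctan (ψ ω) :=
      fun ω => (Real.neg_pi_div_two_lt_arctan _).le
    have := integral_mono (integrable_const _) (hint ψ hψ) hmono
    simpa using this
  have hphi : ∀ n : ℕ, ∃ φ, φ ∈ SuperPrices P F X T t H ∧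
      ∫ ω, Real.arctan (φ ω) ∂P < J + 1 / (n + 1) := by
    intro n
    have hlt : J < J + 1 / (n + 1) := lt_add_of_pos_right J (by positivity)
    obtain ⟨x, ⟨φ, hφ, rfl⟩, hx⟩ := exists_lt_of_csInf_lt hAne hlt
    exact ⟨φ, hφ, hx⟩
  choose φn hφnmem hφnint using hphi
  have hJle : ∀ φ ∈ SuperPrices P F X T t H, J ≤ ∫ ω, Real.arctan (φ ω) ∂P :=
    fun φ hφ => csInf_le hbdd ⟨φ, hφ, rfl⟩
  -- decreasing sequence of superhedging prices
  set gseq : ℕ → Ω → ℝ := fun n => Nat.rec (motive := fun _ => Ω → ℝ)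
    (fun ω => max (φn 0 ω) (-C))
    (fun n gp => fun ω => min (gp ω) (max (φn (n + 1) ω) (-C))) n with hgseqdef
  have hgmem : ∀ n, gseq n ∈ SuperPrices P F X T t H := by
    intro n
    induction n with
    | zero => exact max_mem_superPrices _ (hφnmem 0)
    | succ n ih => exact min_mem_superPrices ih (max_mem_superPrices _ (hφnmem (n + 1)))
  have hganti : ∀ n ω, gseq (n + 1) ω ≤ gseq n ω := fun n ω => min_le_left _ _
  have hgle : ∀ n ω, gseq n ω ≤ max (φn n ω) (-C) := by
    intro n ω
    cases n with
    | zero => exact le_rfl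
    | succ n => exact min_le_right _ _
  have hglb : ∀ n ω, -C ≤ gseq n ω := by
    intro n
    induction n with
    | zero => exact fun ω => le_max_right _ _
    | succ n ih => exact fun ω => le_min (ih ω) (le_max_right _ _)
  set finf : Ω → ℝ := fun ω => ⨅ n, gseq n ω with hfinfdef
  have hbddb : ∀ ω, BddBelow (Set.range fun n => gseq n ω) := fun ω => by
    refine ⟨-C, ?_⟩
    rintro x ⟨n, rfl⟩
    exact hglb n ω
  have htend : ∀ ω, Filter.Tendsto (fun n => gseq n ω) Filter.atTop (nhds (finf ω)) :=
    fun ω => tendsto_atTop_ciInf (antitone_nat_of_succ_le fun n => hganti n ω) (hbddb ω)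
  have hfinfm : Measurable[F t] finf :=
    @measurable_of_tendsto_metrizable Ω ℝ (F t) _ _ _ _ gseq finf
      (fun n => (hgmem n).1) (tendsto_pi_nhds.2 htend)
  -- integral upper bound for the running minima
  have hgint : ∀ n, ∫ ω, Real.arctan (gseq n ω) ∂P < J + 1 / (n + 1) := by
    intro n
    have h1 : ∫ ω, Real.arctan (gseq n ω) ∂P
        ≤ ∫ ω, Real.arctan (max (φn n ω) (-C)) ∂P :=
      integral_mono (hint _ (hgmem n)) (hint _ (max_mem_superPrices _ (hφnmem n)))
        (fun ω => Real.arctan_strictMono.monotone (hgle n ω))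
    have h2 : ∫ ω, Real.arctan (max (φn n ω) (-C)) ∂P = ∫ ω, Real.arctan (φn n ω) ∂P := by
      refine integral_congr_ae ?_
      filter_upwards [hmemlb _ (hφnmem n)] with ω h
      rw [max_eq_left h]
    rw [h2] at h1
    exact lt_of_le_of_lt h1 (hφnint n)
  -- finf is an a.e. lower bound for all superhedging prices
  have hflb : ∀ φ ∈ SuperPrices P F X T t H, finf ≤ᵐ[P] φ := by
    intro φ hφ
    have hφTmem : (fun ω => max (φ ω) (-C)) ∈ SuperPrices P F X T t H :=
      max_mem_superPrices _ hφ
    have hhn : ∀ n, (fun ω => min (max (φ ω) (-C)) (gseq n ω)) ∈ SuperPrices P F X T t H :=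
      fun n => min_mem_superPrices hφTmem (hgmem n)
    have hDle : ∀ n, ∫ ω, (Real.arctan (gseq n ω)
        - Real.arctan (min (max (φ ω) (-C)) (gseq n ω))) ∂P ≤ 1 / (n + 1) := by
      intro n
      rw [integral_sub (hint _ (hgmem n)) (hint _ (hhn n))]
      have ha := hJle _ (hhn n)
      have hb := hgint n
      linarith
    have hDnn : ∀ n, 0 ≤ ∫ ω, (Real.arctan (gseq n ω)
        - Real.arctan (min (max (φ ω) (-C)) (gseq n ω))) ∂P := by
      intro n
      refine integral_nonneg fun ω => ?_
      have := Real.arctan_strictMono.monotone (min_le_right (max (φ ω) (-C)) (gseq n ω))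
      simp only [Pi.zero_apply]
      linarith
    have hLint : Integrable (fun ω => Real.arctan (finf ω)
        - Real.arctan (min (max (φ ω) (-C)) (finf ω))) P := by
      refine Integrable.sub (integrable_arctan_comp (hfinfm.mono (F.le t) le_rfl)) ?_
      exact integrable_arctan_comp ((hφTmem.1.min hfinfm).mono (F.le t) le_rfl)
    have htendL : Filter.Tendsto (fun n => ∫ ω, (Real.arctan (gseq n ω)
        - Real.arctan (min (max (φ ω) (-C)) (gseq n ω))) ∂P) Filter.atTop
        (nhds (∫ ω, (Real.arctan (finf ω)
          - Real.arctan (min (max (φ ω) (-C)) (finf ω))) ∂P)) := by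
      refine tendsto_integral_of_dominated_convergence (fun _ => Real.pi)
        (fun n => ((hint _ (hgmem n)).sub (hint _ (hhn n))).aestronglyMeasurable)
        (integrable_const _) (fun n => ae_of_all _ fun ω => ?_) (ae_of_all _ fun ω => ?_)
      · rw [Real.norm_eq_abs]
        have h1 := Real.arctan_lt_pi_div_two (gseq n ω)
        have h2 := Real.neg_pi_div_two_lt_arctan (gseq n ω)
        have h3 := Real.arctan_lt_pi_div_two (min (max (φ ω) (-C)) (gseq n ω))
        have h4 := Real.neg_pi_div_two_lt_arctan (min (max (φ ω) (-C)) (gseq n ω))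
        rw [abs_le]
        constructor <;> linarith
      · refine Filter.Tendsto.sub ?_ ?_
        · exact (Real.continuous_arctan.tendsto _).comp (htend ω)
        · exact (Real.continuous_arctan.tendsto _).comp (tendsto_const_nhds.min (htend ω))
    have hzero : Filter.Tendsto (fun n => ∫ ω, (Real.arctan (gseq n ω)
        - Real.arctan (min (max (φ ω) (-C)) (gseq n ω))) ∂P) Filter.atTop (nhds 0) := by
      refine tendsto_of_tendsto_of_tendsto_of_le_of_le tendsto_const_nhds
        tendsto_one_div_add_atTop_nhds_zero_nat hDnn hDle
    have hIL : ∫ ω, (Real.arctan (finf ω)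
        - Real.arctan (min (max (φ ω) (-C)) (finf ω))) ∂P = 0 :=
      tendsto_nhds_unique htendL hzero
    have hLnn : 0 ≤ᵐ[P] fun ω => Real.arctan (finf ω)
        - Real.arctan (min (max (φ ω) (-C)) (finf ω)) := by
      refine ae_of_all _ fun ω => ?_
      have := Real.arctan_strictMono.monotone (min_le_right (max (φ ω) (-C)) (finf ω))
      simp only [Pi.zero_apply]
      linarith
    have hL0 := (integral_eq_zero_iff_of_nonneg_ae hLnn hLint).1 hIL
    filter_upwards [hL0, hmemlb _ hφ] with ω h1 h2
    have h3 : Real.arctan (finf ω)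
        = Real.arctan (min (max (φ ω) (-C)) (finf ω)) := by
      have h1' : Real.arctan (finf ω)
          - Real.arctan (min (max (φ ω) (-C)) (finf ω)) = 0 := h1
      linarith
    have h4 : finf ω = min (max (φ ω) (-C)) (finf ω) := Real.arctan_injective h3
    have h5 : finf ω ≤ max (φ ω) (-C) := by
      rw [h4]
      exact min_le_left _ _
    rw [max_eq_left h2] at h5
    exact h5
  have hfinf_le_gt : finf ≤ᵐ[P] gt := hgt.2 finf hflb
  -- pick superhedging strategies for each gseq n
  have hgstrat : ∀ n, ∃ ζ, Predictable F ζ ∧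
      ∀ᵐ ω ∂P, H ω ≤ gseq n ω + Gains X ζ t T ω := fun n => (hgmem n).2
  choose ζn hζnpred hζnae using hgstrat
  -- Part II : gs ≤ᵐ[P] g
  have hpartII : gs ≤ᵐ[P] g := by
    refine hg.2 gs ?_
    intro f hf
    obtain ⟨hfm, ξ, hξ, hfae⟩ := hf
    set W : Ω → ℝ := fun ω => f ω + Gains X ξ s t ω with hWdef
    have hWm : Measurable[F t] W := (hfm.mono (F.mono hst) le_rfl).add
      (gains_measurable hX hξ s t)
    have hfW : ∀ᵐ ω ∂P, finf ω ≤ W ω := by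
      have hY : Measurable[F t] (fun ω => finf ω - W ω) := hfinfm.sub hWm
      have hle : ∀ᵐ ω ∂P, finf ω - W ω ≤ Gains X ξ t T ω := by
        filter_upwards [hfae, hfinf_le_gt] with ω h1 h2
        rw [gains_split_two (X := X) (ξ := ξ) (η := ξ) (ζ := ξ) hst ht ω
          (fun _ _ _ => rfl) (fun _ _ _ => rfl)] at h1
        simp only [hWdef]
        linarith
      have h := NAstar hX hQ (T - t) t (by omega) _ hY ξ hξ hle
      filter_upwards [h] with ω h
      linarith
    have hfeps : ∀ j : ℕ, gs ≤ᵐ[P] fun ω => f ω + 1 / (j + 1) := by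
      intro j
      have hεpos : (0 : ℝ) < 1 / (j + 1) := by positivity
      set q : ℕ → Ω → Prop := fun n ω => gseq n ω < W ω + 1 / (j + 1) ∨
        ∀ m, ¬ gseq m ω < W ω + 1 / (j + 1) with hqdef
      have hqex : ∀ ω, ∃ n, q n ω := by
        intro ω
        by_cases hω : ∃ n, gseq n ω < W ω + 1 / (j + 1)
        · obtain ⟨n, hn⟩ := hω
          exact ⟨n, Or.inl hn⟩
        · refine ⟨0, Or.inr fun m hm => hω ⟨m, hm⟩⟩
      have hqmeas : ∀ n, MeasurableSet[F t] {ω | q n ω} := by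
        intro n
        have h1 : ∀ k : ℕ, MeasurableSet[F t] {ω | gseq k ω < W ω + 1 / (j + 1)} := fun k =>
          measurableSet_lt (hgmem k).1 (hWm.add measurable_const)
        have heq : {ω | q n ω} = {ω | gseq n ω < W ω + 1 / (j + 1)} ∪
            ⋂ m, {ω | gseq m ω < W ω + 1 / (j + 1)}ᶜ := by
          ext ω
          simp only [hqdef, Set.mem_setOf_eq, Set.mem_union, Set.mem_iInter,
            Set.mem_compl_iff]
        rw [heq]
        exact (h1 n).union (MeasurableSet.iInter fun m => (h1 m).compl)
      set ζfull : ℕ → Ω → Fin d → ℝ := fun k =>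
        if k ≤ t then ξ k else fun ω => ζn (Nat.find (hqex ω)) k ω with hζfulldef
      have hζfullpred : Predictable F ζfull := by
        intro k hk
        by_cases hkt : k ≤ t
        · simpa [hζfulldef, hkt] using hξ k hk
        · simp only [hζfulldef, if_neg hkt]
          have htk : t ≤ k - 1 := by omega
          exact Measurable.find (fun n => hζnpred n k hk)
            (fun n => (F.mono htk) _ (hqmeas n)) hqex
      have hmem : (fun ω => f ω + 1 / (j + 1)) ∈ SuperPrices P F X T s H := by
        refine ⟨hfm.add measurable_const, ζfull, hζfullpred, ?_⟩
        have hall : ∀ᵐ ω ∂P, ∀ n, H ω ≤ gseq n ω + Gains X (ζn n) t T ω :=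
          ae_all_iff.2 hζnae
        filter_upwards [hall, hfW] with ω h1 h2
        have hex : ∃ n, gseq n ω < W ω + 1 / (j + 1) := by
          have hlt : (⨅ n, gseq n ω) < W ω + 1 / (j + 1) :=
            lt_of_le_of_lt h2 (lt_add_of_pos_right _ hεpos)
          exact exists_lt_of_ciInf_lt hlt
        have hNω : gseq (Nat.find (hqex ω)) ω < W ω + 1 / (j + 1) := by
          rcases Nat.find_spec (hqex ω) with h | h
          · exact h
          · obtain ⟨n, hn⟩ := hex
            exact absurd hn (h n)
        rw [gains_split_two (X := X) (ξ := ξ)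
          (η := fun k ω => ζn (Nat.find (hqex ω)) k ω) (ζ := ζfull) hst ht ω
          (fun k hk1 hk2 => by simp [hζfulldef, hk2])
          (fun k hk1 hk2 => by simp [hζfulldef, show ¬ k ≤ t by omega])]
        have hgain : Gains X (fun k ω => ζn (Nat.find (hqex ω)) k ω) t T ω
            = Gains X (ζn (Nat.find (hqex ω))) t T ω := rfl
        rw [hgain]
        have h3 := h1 (Nat.find (hqex ω))
        simp only [hWdef] at hNω
        linarith
      exact hgs.1 _ hmem
    have hj : ∀ᵐ ω ∂P, ∀ j : ℕ, gs ω ≤ f ω + 1 / (j + 1) := ae_all_iff.2 hfeps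
    filter_upwards [hj] with ω h
    by_contra hcon
    push_neg at hcon
    obtain ⟨j, hjlt⟩ := exists_nat_one_div_lt (sub_pos.2 hcon)
    have := h j
    linarith
  filter_upwards [hpartI, hpartII] with ω h1 h2
  exact le_antisymm h1 h2
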